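/- Let n ≥ 1, let A be an abelian group, let μ be an uncountable cardinal with |A| < μ, and let λ be a regular uncountable cardinal. Suppose 𝒰 is an ultrafilter on λ such that (i) every X ⊆ λ with |λ ∖ X| < λ belongs to 𝒰, and (ii) 𝒰 is μ-complete, i.e., the intersection of any family of fewer than μ members of 𝒰 belongs to 𝒰. Then every n-coherent A-valued family of height λ is n-trivial. -/

import Mathlib

/-!
Let `L τ ξ` be the `𝒰`-limit of `γ ↦ φ_{τ⌢γ}(ξ)`; it exists because `|A| < μ` and `𝒰` is
`μ`-complete. Then `ψ_τ := (-1)^p L τ` trivializes `Φ`: were `Σ_i (-1)^i ψ_{β̄^i} ≠ φ_β̄` at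
infinitely many `ξ`, countable completeness would give one `γ` above `β̄` at which all the limits
for countably many of these `ξ` are attained simultaneously, and at every such `ξ` the coherence
sum of `β̄⌢γ` equals `±(φ_β̄ - Σ_i (-1)^i ψ_{β̄^i})(ξ) ≠ 0`, contradicting `n`-coherence.
-/

noncomputable section
open Ordinal Set

/-- The alternating sum `Σ_{i ≤ n} (-1)^i Ψ (β^i) (ξ)`, where `β^i` is the tuple `β` with its
`i`-th coordinate deleted. -/
def altSum {A : Type*} [AddCommGroup A] {n : ℕ}
    (Ψ : (Fin n → Ordinal.{0}) → Ordinal.{0} → A) (β : Fin (n + 1) → Ordinal.{0})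
    (ξ : Ordinal.{0}) : A :=
  ∑ i : Fin (n + 1), ((-1 : ℤ) ^ (i : ℕ)) • Ψ (β ∘ i.succAbove) ξ

/-- `Φ` codes an `n`-coherent `A`-valued family of height `δ`: writing `φ_β̄ = Φ β̄` (a
function read on `Iio (β̄ 0)`) for increasing `n`-tuples `β̄` from `δ`, one has
`Σ_{i ≤ n} (-1)^i φ_{β̄^i} =* 0` (i.e. at all but finitely many arguments) for every
increasing `(n+1)`-tuple `β̄` from `δ`.  For `n = 0`, `Φ` codes a single function which is
required to have finite support below every `α < δ`. -/
def NCoherent {A : Type*} [AddCommGroup A] {n : ℕ} (δ : Ordinal.{0})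
    (Φ : (Fin n → Ordinal.{0}) → Ordinal.{0} → A) : Prop :=
  ∀ β : Fin (n + 1) → Ordinal, StrictMono β → (∀ i, β i < δ) →
    {ξ : Ordinal | ξ < β 0 ∧ altSum Φ β ξ ≠ 0}.Finite

/-- `Ψ` is an `(n+1)`-trivialization of the `(n+1)`-dimensional family `Φ` of height `δ`:
`Σ_{i ≤ n} (-1)^i ψ_{β̄^i} =* φ_β̄` for every increasing `(n+1)`-tuple `β̄` from `δ`.
For `n = 0` this says exactly that the single function `ψ = Ψ ∅` satisfies
`ψ ↾ β =* φ_β` for all `β < δ`. -/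
def IsNTrivialization {A : Type*} [AddCommGroup A] {n : ℕ} (δ : Ordinal.{0})
    (Φ : (Fin (n + 1) → Ordinal.{0}) → Ordinal.{0} → A)
    (Ψ : (Fin n → Ordinal.{0}) → Ordinal.{0} → A) : Prop :=
  ∀ β : Fin (n + 1) → Ordinal, StrictMono β → (∀ i, β i < δ) →
    {ξ : Ordinal | ξ < β 0 ∧ altSum Ψ β ξ ≠ Φ β ξ}.Finite

/-- `n`-triviality of an `n`-dimensional family of height `δ`: for `n = 0`, finite support;
for `n ≥ 1`, the existence of an `n`-trivialization. -/
def NTrivial {A : Type*} [AddCommGroup A] :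
    ∀ {n : ℕ}, Ordinal.{0} → ((Fin n → Ordinal.{0}) → Ordinal.{0} → A) → Prop
  | 0, δ, Φ => {ξ : Ordinal | ξ < δ ∧ Φ Fin.elim0 ξ ≠ 0}.Finite
  | _ + 1, δ, Φ => ∃ Ψ, IsNTrivialization δ Φ Ψ

namespace Fin

lemma snoc_comp_castSucc_succAbove {α : Sort*} {n : ℕ} (β : Fin (n + 1) → α) (γ : α)
    (i : Fin (n + 1)) :
    (snoc β γ : Fin (n + 2) → α) ∘ i.castSucc.succAbove = snoc (β ∘ i.succAbove) γ := by
  funext j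
  refine lastCases ?_ (fun j => ?_) j
  · simp [succAbove_of_le_castSucc _ _ (castSucc_le_castSucc_iff.2 (le_last i))]
  · simp [castSucc_succAbove_castSucc]

lemma strictMono_snoc {α : Type*} [Preorder α] {n : ℕ} {β : Fin (n + 1) → α}
    (hβ : StrictMono β) {γ : α} (hγ : ∀ i, β i < γ) : StrictMono (snoc β γ : Fin (n + 2) → α) := by
  refine strictMono_iff_lt_succ.2 fun i => ?_
  refine lastCases ?_ (fun j => ?_) i
  · simpa using hγ (last n)
  · rw [succ_castSucc, snoc_castSucc, snoc_castSucc]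
    exact hβ castSucc_lt_succ

end Fin

section AltSum

variable {A : Type*} [AddCommGroup A] {n : ℕ}

lemma altSum_smul (c : ℤ) (Ψ : (Fin n → Ordinal) → Ordinal → A) (β : Fin (n + 1) → Ordinal)
    (ξ : Ordinal) : altSum (fun τ ξ => c • Ψ τ ξ) β ξ = c • altSum Ψ β ξ := by
  simp only [altSum, Finset.smul_sum, smul_comm c]

lemma altSum_snoc (Φ : (Fin (n + 1) → Ordinal) → Ordinal → A) (β : Fin (n + 1) → Ordinal)
    (γ ξ : Ordinal) :
    altSum Φ (Fin.snoc β γ) ξ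
      = altSum (fun τ => Φ (Fin.snoc τ γ)) β ξ + ((-1 : ℤ) ^ (n + 1)) • Φ β ξ := by
  rw [altSum, Fin.sum_univ_castSucc, Fin.succAbove_last, Fin.snoc_comp_castSucc]
  simp only [altSum, Fin.val_castSucc, Fin.val_last, Fin.snoc_comp_castSucc_succAbove]

end AltSum

open Cardinal

def tailAbove (δ : Ordinal) {m : ℕ} (τ : Fin m → Ordinal) : Set Ordinal :=
  {γ | γ < δ ∧ ∀ j, τ j < γ}

lemma mk_Iio_ord_diff_tailAbove_lt {κ : Cardinal.{0}} (hκ : ℵ₀ ≤ κ) {m : ℕ}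
    {τ : Fin m → Ordinal} (hτ : ∀ j, τ j < κ.ord) :
    #(Iio κ.ord \ tailAbove κ.ord τ : Set Ordinal) < Cardinal.lift.{1} κ := by
  have hlim : Order.IsSuccLimit κ.ord := isSuccLimit_ord hκ
  have hsup : Finset.univ.sup τ < κ.ord :=
    (Finset.sup_lt_iff hlim.bot_lt).2 fun j _ => hτ j
  have hsub : Iio κ.ord \ tailAbove κ.ord τ ⊆ Iio (Order.succ (Finset.univ.sup τ)) := by
    rintro γ ⟨hγ : γ < κ.ord, hγτ⟩
    obtain ⟨j, hj⟩ : ∃ j, γ ≤ τ j := by simpa [tailAbove, hγ] using hγτ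
    exact Order.lt_succ_iff.2 (hj.trans (Finset.le_sup (Finset.mem_univ j)))
  calc #(Iio κ.ord \ tailAbove κ.ord τ : Set Ordinal)
      ≤ #(Iio (Order.succ (Finset.univ.sup τ))) := mk_le_mk_of_subset hsub
    _ = Cardinal.lift.{1} (Order.succ (Finset.univ.sup τ)).card := Cardinal.mk_Iio_ordinal _
    _ < Cardinal.lift.{1} κ := Cardinal.lift_lt.2 (lt_ord.1 (hlim.succ_lt hsup))

section CompleteUltrafilter

variable {δ : Ordinal} {μ : Cardinal} {U : Set (Set Ordinal)}

lemma inter_iInter_mem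
    (hcomplete : ∀ S : Set (Set Ordinal), S ⊆ U → S.Nonempty →
      #S < Cardinal.lift.{1} μ → ⋂₀ S ∈ U)
    (hμ : ℵ₀ < μ) {ι : Type} (hι : #ι < μ) {T : Set Ordinal} (hT : T ∈ U)
    {C : ι → Set Ordinal} (hC : ∀ i, C i ∈ U) : T ∩ ⋂ i, C i ∈ U := by
  rw [← sInter_range, ← sInter_insert]
  refine hcomplete _ ?_ ⟨T, mem_insert _ _⟩ ?_
  · rintro X (rfl | ⟨i, rfl⟩)
    exacts [hT, hC i]
  · calc #(insert T (range C) : Set (Set Ordinal)) ≤ #(range C) + 1 := mk_insert_le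
      _ ≤ Cardinal.lift.{1} #ι + 1 := by gcongr; simpa using mk_range_le_lift (f := C)
      _ = Cardinal.lift.{1} (#ι + 1) := by simp
      _ < Cardinal.lift.{1} μ :=
        Cardinal.lift_lt.2 (add_lt_of_lt hμ.le hι (one_lt_aleph0.trans hμ))

lemma exists_setOf_eq_mem {A : Type} (hempty : ∅ ∉ U)
    (hultra : ∀ X, X ⊆ Iio δ → X ∈ U ∨ (Iio δ \ X) ∈ U)
    (hcomplete : ∀ S : Set (Set Ordinal), S ⊆ U → S.Nonempty →
      #S < Cardinal.lift.{1} μ → ⋂₀ S ∈ U)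
    (hμ : ℵ₀ < μ) (hA : #A < μ) {T : Set Ordinal} (hT : T ∈ U) (hTδ : T ⊆ Iio δ)
    (f : Ordinal → A) : ∃ a, {γ ∈ T | f γ = a} ∈ U := by
  by_contra! hfiber
  have hcompl (a : A) : Iio δ \ {γ ∈ T | f γ = a} ∈ U :=
    (hultra _ fun γ hγ => hTδ hγ.1).resolve_left (hfiber a)
  refine hempty (eq_empty_iff_forall_notMem.2 (fun γ hγ => ?_) ▸
    inter_iInter_mem hcomplete hμ hA hT hcompl)
  exact (mem_iInter.1 hγ.2 (f γ)).2 ⟨hγ.1, rfl⟩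

end CompleteUltrafilter

lemma sub_altSum_eq_smul_altSum_snoc {A : Type*} [AddCommGroup A] {n : ℕ}
    {Φ : (Fin (n + 1) → Ordinal) → Ordinal → A} {L : (Fin n → Ordinal) → Ordinal → A}
    {β : Fin (n + 1) → Ordinal} {γ ξ : Ordinal}
    (hL : ∀ i : Fin (n + 1), Φ (Fin.snoc (β ∘ i.succAbove) γ) ξ = L (β ∘ i.succAbove) ξ) :
    Φ β ξ - altSum (fun τ ξ => ((-1 : ℤ) ^ n) • L τ ξ) β ξ
      = ((-1 : ℤ) ^ (n + 1)) • altSum Φ (Fin.snoc β γ) ξ := by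
  have hsum : altSum (fun τ => Φ (Fin.snoc τ γ)) β ξ = altSum L β ξ :=
    Finset.sum_congr rfl fun i _ => congrArg _ (hL i)
  rw [altSum_snoc, altSum_smul, hsum, smul_add, smul_smul, ← pow_add,
    Even.neg_one_pow ⟨n + 1, rfl⟩, one_smul, pow_succ, mul_neg_one, neg_smul, sub_eq_add_neg,
    add_comm]

lemma isNTrivialization_of_forall_seq_snoc_eq {A : Type*} [AddCommGroup A] {p : ℕ}
    {δ : Ordinal}
    {Φ : (Fin (p + 1) → Ordinal) → Ordinal → A} (hΦ : NCoherent δ Φ)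
    (L : (Fin p → Ordinal) → Ordinal → A)
    (hL : ∀ β : Fin (p + 1) → Ordinal, StrictMono β → (∀ i, β i < δ) →
      ∀ ξ : ℕ → Ordinal, ∃ γ < δ, (∀ i, β i < γ) ∧
        ∀ k, ∀ i : Fin (p + 1),
          Φ (Fin.snoc (β ∘ i.succAbove) γ) (ξ k) = L (β ∘ i.succAbove) (ξ k)) :
    IsNTrivialization δ Φ (fun τ ξ => ((-1 : ℤ) ^ p) • L τ ξ) := by
  intro β hβ hβδ
  by_contra hinf
  let f := Set.Infinite.natEmbedding _ hinf
  obtain ⟨γ, hγδ, hβγ, hγ⟩ := hL β hβ hβδ fun k => f k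
  have hsnoc : ∀ i, (Fin.snoc β γ : Fin (p + 2) → Ordinal) i < δ :=
    Fin.lastCases (by simpa using hγδ) (fun i => by simpa using hβδ i)
  refine (hΦ _ (Fin.strictMono_snoc hβ hβγ) hsnoc).not_infinite <|
    infinite_of_injective_forall_mem (Subtype.val_injective.comp f.injective) fun k => ?_
  obtain ⟨hξβ, hne⟩ := (f k).2
  refine ⟨by simpa [Fin.snoc_apply_zero] using hξβ, fun hcoh => hne (eq_comm.1 ?_)⟩
  rw [← sub_eq_zero, sub_altSum_eq_smul_altSum_snoc (hγ k)]
  exact (congrArg _ hcoh).trans (smul_zero _)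

theorem statement15_general (p : ℕ) (A : Type) [AddCommGroup A]
    (μ lam : Cardinal) (hμ : Cardinal.aleph0 < μ) (hA : Cardinal.mk A < μ)
    (hreg : lam.IsRegular)
    (U : Set (Set Ordinal))
    (hU2 : ∅ ∉ U)
    (hUultra : ∀ X, X ⊆ Set.Iio lam.ord → X ∈ U ∨ (Set.Iio lam.ord \ X) ∈ U)
    (hUtail : ∀ X, X ⊆ Set.Iio lam.ord →
      Cardinal.mk ↥(Set.Iio lam.ord \ X) < Cardinal.lift.{1} lam → X ∈ U)
    (hUcomplete : ∀ S : Set (Set Ordinal), S ⊆ U → S.Nonempty →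
      Cardinal.mk ↥S < Cardinal.lift.{1} μ → ⋂₀ S ∈ U)
    (Φ : (Fin (p + 1) → Ordinal) → Ordinal → A)
    (hΦ : NCoherent lam.ord Φ) :
    NTrivial lam.ord Φ := by
  have htail {m : ℕ} {τ : Fin m → Ordinal} (hτ : ∀ j, τ j < lam.ord) :
      tailAbove lam.ord τ ∈ U :=
    hUtail _ (fun _ hγ => hγ.1) (mk_Iio_ord_diff_tailAbove_lt hreg.aleph0_le hτ)
  have hlimit (τ : Fin p → Ordinal) (ξ : Ordinal) : ∃ a, (∀ j, τ j < lam.ord) →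
      {γ ∈ tailAbove lam.ord τ | Φ (Fin.snoc τ γ) ξ = a} ∈ U := by
    by_cases hτ : ∀ j, τ j < lam.ord
    · obtain ⟨a, ha⟩ := exists_setOf_eq_mem hU2 hUultra hUcomplete hμ hA (htail hτ)
        (fun _ hγ => hγ.1) fun γ => Φ (Fin.snoc τ γ) ξ
      exact ⟨a, fun _ => ha⟩
    · exact ⟨0, fun h => absurd h hτ⟩
  choose L hL using hlimit
  refine ⟨_, isNTrivialization_of_forall_seq_snoc_eq hΦ L fun β _ hβδ ξ => ?_⟩
  obtain ⟨γ, ⟨hγδ, hβγ⟩, hγ⟩ := nonempty_iff_ne_empty.2 fun h => hU2 <| h ▸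
    inter_iInter_mem (ι := ℕ × Fin (p + 1)) hUcomplete hμ
      ((Cardinal.mk_le_aleph0_iff.2 inferInstance).trans_lt hμ) (htail hβδ)
      fun ki => hL (β ∘ ki.2.succAbove) (ξ ki.1) fun _ => hβδ _
  exact ⟨γ, hγδ, hβγ, fun k i => (mem_iInter.1 hγ (k, i)).2⟩

/-- Theorem: if `λ` is regular uncountable, `μ > |A|` is uncountable, and `𝒰` is an
ultrafilter on `λ` which is `μ`-complete and contains all `X ⊆ λ` with `|λ \ X| < λ`, then
every `n`-coherent `A`-valued family of height `λ` is `n`-trivial (`n = p + 1 ≥ 1`). -/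
theorem statement15 (p : ℕ) (A : Type) [AddCommGroup A]
    (μ lam : Cardinal) (hμ : Cardinal.aleph0 < μ) (hA : Cardinal.mk A < μ)
    (hreg : lam.IsRegular) (hunc : Cardinal.aleph0 < lam)
    (U : Set (Set Ordinal))
    (hU1 : ∀ X ∈ U, X ⊆ Set.Iio lam.ord)
    (hU2 : ∅ ∉ U)
    (hU3 : ∀ X ∈ U, ∀ Y, X ⊆ Y → Y ⊆ Set.Iio lam.ord → Y ∈ U)
    (hUultra : ∀ X, X ⊆ Set.Iio lam.ord → X ∈ U ∨ (Set.Iio lam.ord \ X) ∈ U)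
    (hUtail : ∀ X, X ⊆ Set.Iio lam.ord →
      Cardinal.mk ↥(Set.Iio lam.ord \ X) < Cardinal.lift.{1} lam → X ∈ U)
    (hUcomplete : ∀ S : Set (Set Ordinal), S ⊆ U → S.Nonempty →
      Cardinal.mk ↥S < Cardinal.lift.{1} μ → ⋂₀ S ∈ U)
    (Φ : (Fin (p + 1) → Ordinal) → Ordinal → A)
    (hΦ : NCoherent lam.ord Φ) :
    NTrivial lam.ord Φ :=
  statement15_general p A μ lam hμ hA hreg U hU2 hUultra hUtail hUcomplete Φ hΦ
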